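/- Let 1 ≤ d < ω, let κ be a regular cardinal, and let 0 < σ < κ. Assume SDHL(d,σ,κ) holds. Let ⟨T_i : i < d⟩ be a sequence of regular κ-trees, let c : ⊗_{i<d} T_i → σ be a coloring, and let A ⊆ κ be cofinal in κ. Then there exist ordinals α < β < κ, both belonging to A, nodes ⟨t_i ∈ T_i(α) : i < d⟩, and sets ⟨X_i ⊆ T_i(β) : i < d⟩ such that each X_i dominates T_i(α+1) ∩ Cone(t_i) and c is constant on ⊗_{i<d} X_i. -/

import Mathlib

open Cardinal Set

/-- A node of `^{<κ}κ`: a function from an ordinal `len < κ` into the ordinals `< κ`,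
normalized to take value `0` at or beyond its length (so that equality of nodes is
extensional). -/
structure SeqNode (κ : Cardinal.{0}) : Type 1 where
  len : Ordinal.{0}
  len_lt : len < κ.ord
  val : Ordinal.{0} → Ordinal.{0}
  val_lt : ∀ β < len, val β < κ.ord
  val_eq_zero : ∀ β, len ≤ β → val β = 0

namespace SeqNode

variable {κ : Cardinal.{0}}

/-- `s.Init t` means `s ⊑ t`, i.e. `s` is an initial segment of `t`. -/
def Init (s t : SeqNode κ) : Prop :=
  s.len ≤ t.len ∧ ∀ β < s.len, s.val β = t.val β

/-- The restriction `t ↾ β` of `t` to length `min β t.len`. -/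
noncomputable def restrict (t : SeqNode κ) (β : Ordinal.{0}) : SeqNode κ where
  len := min β t.len
  len_lt := lt_of_le_of_lt (min_le_right _ _) t.len_lt
  val := fun γ => if γ < min β t.len then t.val γ else 0
  val_lt := fun γ hγ => by
    rw [if_pos hγ]
    exact t.val_lt γ (lt_of_lt_of_le hγ (min_le_right _ _))
  val_eq_zero := fun γ hγ => by
    rw [if_neg (not_lt.mpr hγ)]

end SeqNode

/-- The level `T(α)`: nodes of `T` of length `α`. -/
def SeqLevel {κ : Cardinal.{0}} (T : Set (SeqNode κ)) (α : Ordinal.{0}) : Set (SeqNode κ) :=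
  {t ∈ T | t.len = α}

/-- A tree: a set of nodes closed under initial segments. -/
def IsSeqTree {κ : Cardinal.{0}} (T : Set (SeqNode κ)) : Prop :=
  ∀ t ∈ T, ∀ s : SeqNode κ, s.Init t → s ∈ T

/-- A branch of `T`: a subset of `T` linearly ordered by the initial segment relation. -/
def IsBranch {κ : Cardinal.{0}} (T b : Set (SeqNode κ)) : Prop :=
  b ⊆ T ∧ ∀ s ∈ b, ∀ t ∈ b, s.Init t ∨ t.Init s

/-- A maximal branch of `T`. -/
def IsMaximalBranch {κ : Cardinal.{0}} (T b : Set (SeqNode κ)) : Prop :=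
  IsBranch T b ∧ ∀ b' : Set (SeqNode κ), IsBranch T b' → b ⊆ b' → b' = b

/-- `T` is perfect: every node has two incomparable extensions in `T`. -/
def IsPerfect {κ : Cardinal.{0}} (T : Set (SeqNode κ)) : Prop :=
  ∀ t ∈ T, ∃ s ∈ T, ∃ u ∈ T, t.Init s ∧ t.Init u ∧ ¬ s.Init u ∧ ¬ u.Init s

/-- `T ⊆ ^{<κ}κ` is a regular tree of height `η`: it is a tree all of whose nodes
have length `< η`, it has nonempty levels of cardinality `< η.card` at every `α < η`,
every maximal branch meets every level `< η`, and it is perfect. -/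
def IsRegularTreeIn (κ : Cardinal.{0}) (η : Ordinal.{0}) (T : Set (SeqNode κ)) : Prop :=
  IsSeqTree T ∧
  (∀ t ∈ T, t.len < η) ∧
  (∀ α < η, (SeqLevel T α).Nonempty) ∧
  (∀ α < η, Cardinal.mk ↥(SeqLevel T α) < Cardinal.lift.{1} η.card) ∧
  (∀ b : Set (SeqNode κ), IsMaximalBranch T b → ∀ α < η, ∃ t ∈ b, t.len = α) ∧
  IsPerfect T

/-- A regular `κ`-tree. -/
def IsRegularTree (κ : Cardinal.{0}) (T : Set (SeqNode κ)) : Prop :=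
  IsRegularTreeIn κ κ.ord T

/-- The truncation `T ∩ ^{<α}κ` of `T` below level `α`. -/
def TreeTrunc {κ : Cardinal.{0}} (T : Set (SeqNode κ)) (α : Ordinal.{0}) : Set (SeqNode κ) :=
  {t ∈ T | t.len < α}

/-- The level product `⊗_{i<d} X_i`: tuples all of whose entries lie on one common level. -/
def LevelProd {κ : Cardinal.{0}} {d : ℕ} (X : Fin d → Set (SeqNode κ)) :
    Set (Fin d → SeqNode κ) :=
  {x | ∃ α : Ordinal.{0}, ∀ i, x i ∈ X i ∧ (x i).len = α}

/-- `X` dominates `Y`: every element of `Y` has an extension in `X`. -/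
def Dominates {κ : Cardinal.{0}} (X Y : Set (SeqNode κ)) : Prop :=
  ∀ y ∈ Y, ∃ x ∈ X, SeqNode.Init y x

/-- `Cone t`: all extensions of `t`. -/
def Cone {κ : Cardinal.{0}} (t : SeqNode κ) : Set (SeqNode κ) :=
  {s : SeqNode κ | t.Init s}

/-- `X` is a somewhere dense level matrix for trees `T` of height `η`. -/
def IsSDMatrixIn {κ : Cardinal.{0}} (η : Ordinal.{0}) {d : ℕ}
    (T X : Fin d → Set (SeqNode κ)) : Prop :=
  ∃ α β : Ordinal.{0}, α < β ∧ β < η ∧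
    ∃ t : Fin d → SeqNode κ,
      (∀ i, t i ∈ SeqLevel (T i) α) ∧
      ∀ i, X i ⊆ SeqLevel (T i) β ∧
        Dominates (X i) (SeqLevel (T i) (α + 1) ∩ Cone (t i))

/-- `X` is a somewhere dense level matrix for the regular `κ`-trees `T`. -/
def IsSDMatrix (κ : Cardinal.{0}) {d : ℕ} (T X : Fin d → Set (SeqNode κ)) : Prop :=
  IsSDMatrixIn κ.ord T X

/-- The coloring `c` is constant (monochromatic) on the level product of `X`. -/
def MonoOn {κ : Cardinal.{0}} {d : ℕ} (c : (Fin d → SeqNode κ) → Ordinal.{0})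
    (X : Fin d → Set (SeqNode κ)) : Prop :=
  ∀ x ∈ LevelProd X, ∀ y ∈ LevelProd X, c x = c y

/-- The somewhere dense Halpern–Läuchli theorem `SDHL(d,σ,κ)`. -/
def SDHL (d : ℕ) (σ κ : Cardinal.{0}) : Prop :=
  ∀ T : Fin d → Set (SeqNode κ), (∀ i, IsRegularTree κ (T i)) →
    ∀ c : (Fin d → SeqNode κ) → Ordinal.{0},
      (∀ x ∈ LevelProd T, c x < σ.ord) →
      ∃ X : Fin d → Set (SeqNode κ), (∀ i, X i ⊆ T i) ∧
        IsSDMatrix κ T X ∧ MonoOn c X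

/-- `s` is an immediate successor of `t`. -/
def IsImmediateSucc {κ : Cardinal.{0}} (t s : SeqNode κ) : Prop :=
  t.Init s ∧ s.len = t.len + 1

/-- `A` is a cofinal subset of (the ordinals below) `η`. -/
def CofinalIn (A : Set Ordinal.{0}) (η : Ordinal.{0}) : Prop :=
  A ⊆ Set.Iio η ∧ ∀ β < η, ∃ α ∈ A, β ≤ α

/-- `T'` is a strong subtree of the regular `κ`-tree `T` witnessed by the cofinal set
`A ⊆ κ` of splitting levels. -/
def IsStrongSubtree (κ : Cardinal.{0}) (T' T : Set (SeqNode κ)) (A : Set Ordinal.{0}) : Prop :=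
  T' ⊆ T ∧ IsRegularTree κ T' ∧ CofinalIn A κ.ord ∧
    ∀ t ∈ T',
      (t.len ∈ A → ∀ s ∈ T, IsImmediateSucc t s → s ∈ T') ∧
      (t.len ∉ A → ∃! s : SeqNode κ, s ∈ T' ∧ IsImmediateSucc t s)

/-- The strong tree Halpern–Läuchli theorem `HL(d,σ,κ)`. -/
def HL (d : ℕ) (σ κ : Cardinal.{0}) : Prop :=
  ∀ T : Fin d → Set (SeqNode κ), (∀ i, IsRegularTree κ (T i)) →
    ∀ c : (Fin d → SeqNode κ) → Ordinal.{0},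
      (∀ x ∈ LevelProd T, c x < σ.ord) →
      ∃ T' : Fin d → Set (SeqNode κ), ∃ A : Set Ordinal.{0},
        (∀ i, IsStrongSubtree κ (T' i) (T i) A) ∧
        ∀ x : Fin d → SeqNode κ, (∃ α ∈ A, ∀ i, x i ∈ SeqLevel (T' i) α) →
          ∀ y : Fin d → SeqNode κ, (∃ α ∈ A, ∀ i, y i ∈ SeqLevel (T' i) α) →
            c x = c y

/-- `e` is the increasing enumeration (along the ordinals below `η`) of `A`. -/
def IsIncreasingEnum (e : Ordinal.{0} → Ordinal.{0}) (η : Ordinal.{0})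
    (A : Set Ordinal.{0}) : Prop :=
  (∀ ζ < η, e ζ ∈ A) ∧
  (∀ ζ ξ : Ordinal.{0}, ζ < ξ → ξ < η → e ζ < e ξ) ∧
  (∀ a ∈ A, ∃ ζ < η, e ζ = a)

/-- The tail cone Halpern–Läuchli theorem `HL^tc(d,<κ,κ)`. -/
def HLtc (d : ℕ) (κ : Cardinal.{0}) : Prop :=
  ∀ T : Fin d → Set (SeqNode κ), (∀ i, IsRegularTree κ (T i)) →
    ∀ σ : Ordinal.{0} → Cardinal.{0}, (∀ ζ < κ.ord, 0 < σ ζ ∧ σ ζ < κ) →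
      ∀ c : Ordinal.{0} → (Fin d → SeqNode κ) → Ordinal.{0},
        (∀ ζ < κ.ord, ∀ x ∈ LevelProd T, c ζ x < (σ ζ).ord) →
        ∃ T' : Fin d → Set (SeqNode κ), ∃ A : Set Ordinal.{0},
          ∃ e : Ordinal.{0} → Ordinal.{0},
            (∀ i, IsStrongSubtree κ (T' i) (T i) A) ∧
            IsIncreasingEnum e κ.ord A ∧
            ∀ ζ ξ : Ordinal.{0}, ζ ≤ ξ → ξ < κ.ord →
              ∀ t : Fin d → SeqNode κ, (∀ i, t i ∈ SeqLevel (T' i) (e ξ)) →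
                c ζ t = c ζ (fun i => (t i).restrict (e ζ))

/-- The modified tail cone Halpern–Läuchli theorem. -/
def HLtcMod (d : ℕ) (κ : Cardinal.{0}) : Prop :=
  ∀ T : Fin d → Set (SeqNode κ), (∀ i, IsRegularTree κ (T i)) →
    ∀ σ : Ordinal.{0} → Cardinal.{0}, (∀ ζ < κ.ord, 0 < σ ζ ∧ σ ζ < κ) →
      ∀ c : Ordinal.{0} → (Fin d → SeqNode κ) → Ordinal.{0},
        (∀ ζ < κ.ord, ∀ x ∈ LevelProd T, c ζ x < (σ ζ).ord) →
        ∃ T' : Fin d → Set (SeqNode κ), ∃ A : Set Ordinal.{0},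
          ∃ e : Ordinal.{0} → Ordinal.{0},
            (∀ i, IsStrongSubtree κ (T' i) (T i) A) ∧
            IsIncreasingEnum e κ.ord A ∧
            ∃ μ : Ordinal.{0} → Ordinal.{0},
              (∀ γ < κ.ord, γ ≤ μ γ ∧ μ γ < κ.ord) ∧
              ∀ ζ γ : Ordinal.{0}, ζ ≤ γ → γ < κ.ord →
                ∀ t : Fin d → SeqNode κ, (∀ i, t i ∈ SeqLevel (T' i) (e γ)) →
                  c (μ ζ) t = c (μ ζ) (fun i => (t i).restrict (e ζ))

/-- `κ` is strongly inaccessible: uncountable, regular, and a strong limit. -/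
def StronglyInaccessible (κ : Cardinal.{0}) : Prop :=
  ℵ₀ < κ ∧ κ.IsRegular ∧ ∀ lam : Cardinal.{0}, lam < κ → (2 : Cardinal.{0}) ^ lam < κ

/-- `C` is a club (closed unbounded) subset of the ordinals below `η`. -/
def IsClubIn (C : Set Ordinal.{0}) (η : Ordinal.{0}) : Prop :=
  C ⊆ Set.Iio η ∧ (∀ β < η, ∃ γ ∈ C, β ≤ γ) ∧
    ∀ s ⊆ C, s.Nonempty → sSup s < η → sSup s ∈ C

/-- `S` is a stationary subset of the ordinals below `η`. -/
def IsStationaryIn (S : Set Ordinal.{0}) (η : Ordinal.{0}) : Prop :=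
  ∀ C : Set Ordinal.{0}, IsClubIn C η → (S ∩ C).Nonempty

/-- `U` is an ultrafilter on the ordinals below `η`. -/
def IsUltrafilterOn (U : Set (Set Ordinal.{0})) (η : Ordinal.{0}) : Prop :=
  (∀ A ∈ U, A ⊆ Set.Iio η) ∧ Set.Iio η ∈ U ∧ (∅ : Set Ordinal.{0}) ∉ U ∧
  (∀ A ∈ U, ∀ B : Set Ordinal.{0}, A ⊆ B → B ⊆ Set.Iio η → B ∈ U) ∧
  (∀ A ∈ U, ∀ B ∈ U, A ∩ B ∈ U) ∧
  (∀ A : Set Ordinal.{0}, A ⊆ Set.Iio η → (A ∈ U ∨ Set.Iio η \ A ∈ U))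

/-- `U` is `κ`-complete: closed under intersections of fewer than `κ` of its members. -/
def IsKappaComplete (U : Set (Set Ordinal.{0})) (κ : Cardinal.{0}) : Prop :=
  ∀ s : Set (Set Ordinal.{0}), s ⊆ U → s.Nonempty →
    Cardinal.mk ↥s < Cardinal.lift.{1} κ → ⋂₀ s ∈ U

/-- `U` is nonprincipal. -/
def IsNonprincipal (U : Set (Set Ordinal.{0})) : Prop :=
  ∀ β : Ordinal.{0}, ({β} : Set Ordinal.{0}) ∉ U

/-- `U` is a normal ultrafilter on `κ`: a nonprincipal `κ`-complete ultrafilter closed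
under diagonal intersections. -/
def IsNormalUltrafilterOn (U : Set (Set Ordinal.{0})) (κ : Cardinal.{0}) : Prop :=
  IsUltrafilterOn U κ.ord ∧ IsKappaComplete U κ ∧ IsNonprincipal U ∧
    ∀ A : Ordinal.{0} → Set Ordinal.{0}, (∀ α < κ.ord, A α ∈ U) →
      {β : Ordinal.{0} | β < κ.ord ∧ ∀ α < β, β ∈ A α} ∈ U

/-- `κ` is a measurable cardinal. -/
def IsMeasurableCard (κ : Cardinal.{0}) : Prop :=
  ℵ₀ < κ ∧ ∃ U : Set (Set Ordinal.{0}),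
    IsUltrafilterOn U κ.ord ∧ IsKappaComplete U κ ∧ IsNonprincipal U

/-- The set of (ordinals which are) infinite cardinals `α < κ` with `σ < α` at which
`SDHL(d,σ,α)` holds, viewed as a set of ordinals below `κ`. -/
def SDHLset (d : ℕ) (σ κ : Cardinal.{0}) : Set Ordinal.{0} :=
  {β : Ordinal.{0} | β < κ.ord ∧ ℵ₀ ≤ β.card ∧ β.card.ord = β ∧ σ < β.card ∧
    SDHL d σ β.card}

/-!
Enumerate `A` increasingly as `e : κ → A` and code the nodes of each `T i` injectively by
ordinals `< κ`. The tree `U i` whose level `ζ` consists of the sequences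
`⟨code (t ↾ e (ξ + 1)) : ξ < ζ⟩`, for `t ∈ T i (e ζ)`, is again a regular `κ`-tree, and decoding
maps `U i (ζ)` into `T i (e ζ)`. SDHL for the trees `U i` and the pulled-back colouring gives a
matrix at levels `α < β`, which decodes to a monochromatic matrix at the levels `e α < e β` of `A`.
A node of successor length `ξ + 1` determines its decoding in `T i (e (ξ + 1))`, and every node of
`T i (e α + 1)` extends to that level, so domination of `U i (α + 1)` becomes domination of
`T i (e α + 1)`.
-/

namespace SeqNode

variable {κ : Cardinal.{0}} {s t u : SeqNode κ} {β γ : Ordinal.{0}}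

theorem ext (hlen : s.len = t.len) (hval : ∀ β < s.len, s.val β = t.val β) : s = t := by
  obtain ⟨l, hl, v, hv, hv0⟩ := s
  obtain ⟨l', hl', v', hv', hv0'⟩ := t
  obtain rfl : l = l' := hlen
  obtain rfl : v = v' := funext fun β => by
    rcases lt_or_ge β l with h | h
    · exact hval β h
    · rw [hv0 β h, hv0' β h]
  rfl

@[refl]
theorem Init.refl (t : SeqNode κ) : t.Init t := ⟨le_rfl, fun _ _ => rfl⟩

theorem Init.trans (h₁ : s.Init t) (h₂ : t.Init u) : s.Init u :=
  ⟨h₁.1.trans h₂.1, fun β hβ => (h₁.2 β hβ).trans (h₂.2 β (hβ.trans_le h₁.1))⟩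

theorem Init.eq_of_len_le (h : s.Init t) (hle : t.len ≤ s.len) : s = t :=
  ext (h.1.antisymm hle) h.2

theorem Init.of_len_le (hs : s.Init u) (ht : t.Init u) (hle : s.len ≤ t.len) : s.Init t :=
  ⟨hle, fun β hβ => (hs.2 β hβ).trans (ht.2 β (hβ.trans_le hle)).symm⟩

theorem Init.total (hs : s.Init u) (ht : t.Init u) : s.Init t ∨ t.Init s :=
  (le_total s.len t.len).imp (hs.of_len_le ht) (ht.of_len_le hs)

theorem restrict_len (h : β ≤ t.len) : (t.restrict β).len = β := min_eq_left h

theorem restrict_val (h : γ < min β t.len) : (t.restrict β).val γ = t.val γ := if_pos h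

theorem restrict_init (t : SeqNode κ) (β : Ordinal.{0}) : (t.restrict β).Init t :=
  ⟨min_le_right _ _, fun _ hγ => restrict_val hγ⟩

theorem restrict_of_len_le (h : t.len ≤ β) : t.restrict β = t :=
  (restrict_init t β).eq_of_len_le (le_min h le_rfl)

theorem Init.restrict_len_eq (h : s.Init t) : t.restrict s.len = s :=
  ext (restrict_len h.1) fun γ hγ => by
    rw [restrict_val hγ]
    exact (h.2 γ (hγ.trans_le (min_le_left _ _))).symm

theorem restrict_restrict (h : γ ≤ β) : (t.restrict β).restrict γ = t.restrict γ := by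
  have hlen : ((t.restrict β).restrict γ).len = (t.restrict γ).len := by
    simp only [restrict, ← min_assoc, min_eq_left h]
  exact (((restrict_init _ γ).trans (restrict_init t β)).of_len_le (restrict_init t γ)
    hlen.le).eq_of_len_le hlen.ge

theorem Init.restrict_eq (h : s.Init t) (hγ : γ ≤ s.len) : t.restrict γ = s.restrict γ := by
  rw [← h.restrict_len_eq, restrict_restrict hγ]

theorem restrict_init_or (t : SeqNode κ) (β γ : Ordinal.{0}) :
    (t.restrict β).Init (t.restrict γ) ∨ (t.restrict γ).Init (t.restrict β) :=
  (restrict_init t β).total (restrict_init t γ)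

end SeqNode

section Trees

variable {κ : Cardinal.{0}} {T b : Set (SeqNode κ)} {s t u : SeqNode κ}

theorem IsSeqTree.restrict_mem (hT : IsSeqTree T) (ht : t ∈ T) (β : Ordinal.{0}) :
    t.restrict β ∈ T :=
  hT t ht _ (t.restrict_init β)

theorem IsBranch.sUnion {c : Set (Set (SeqNode κ))} (hc : ∀ b ∈ c, IsBranch T b)
    (hchain : IsChain (· ⊆ ·) c) : IsBranch T (⋃₀ c) := by
  refine ⟨sUnion_subset fun b hb => (hc b hb).1, ?_⟩
  rintro s ⟨bs, hbs, hsb⟩ t ⟨bt, hbt, htb⟩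
  rcases eq_or_ne bs bt with rfl | hne
  · exact (hc bs hbs).2 s hsb t htb
  · rcases hchain hbs hbt hne with h | h
    · exact (hc bt hbt).2 s (h hsb) t htb
    · exact (hc bs hbs).2 s hsb t (h htb)

theorem IsBranch.exists_maximal (hb : IsBranch T b) : ∃ m, b ⊆ m ∧ IsMaximalBranch T m := by
  obtain ⟨m, hbm, hm⟩ := zorn_subset_nonempty {b' | IsBranch T b'}
    (fun c hc hchain _ => ⟨⋃₀ c, IsBranch.sUnion (fun b' hb' => hc hb') hchain,
      fun _ => subset_sUnion_of_mem⟩) b hb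
  exact ⟨m, hbm, hm.1, fun b' hb' hsub => (hm.2 hb' hsub).antisymm hsub⟩

theorem IsMaximalBranch.mem_of_forall (hb : IsMaximalBranch T b) (hu : u ∈ T)
    (h : ∀ s ∈ b, s.Init u ∨ u.Init s) : u ∈ b := by
  have hbr : IsBranch T (insert u b) := by
    refine ⟨insert_subset hu hb.1.1, ?_⟩
    rintro s (rfl | hs) t (rfl | ht)
    · exact Or.inl (.refl _)
    · exact (h t ht).symm
    · exact h s hs
    · exact hb.1.2 s hs t ht
  exact hb.2 _ hbr (subset_insert u b) ▸ mem_insert u b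

theorem IsMaximalBranch.mem_of_init (hT : IsSeqTree T) (hb : IsMaximalBranch T b) (ht : t ∈ b)
    (hst : s.Init t) : s ∈ b :=
  hb.mem_of_forall (hT t (hb.1.1 ht) s hst) fun u hu =>
    (hb.1.2 u hu t ht).elim (fun hut => hut.total hst) fun htu => Or.inr (hst.trans htu)

theorem IsMaximalBranch.exists_len_eq (hT : IsSeqTree T) (hb : IsMaximalBranch T b)
    {γ : Ordinal.{0}}
    (hext : (∀ s ∈ b, s.len < γ) → ∃ u ∈ T, u.len = γ ∧ ∀ s ∈ b, s.Init u) :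
    ∃ t ∈ b, t.len = γ := by
  by_cases hlong : ∃ v ∈ b, γ ≤ v.len
  · obtain ⟨v, hv, hγv⟩ := hlong
    exact ⟨v.restrict γ, hb.mem_of_init hT hv (v.restrict_init γ), SeqNode.restrict_len hγv⟩
  · push Not at hlong
    obtain ⟨u, hu, hlen, hinit⟩ := hext hlong
    exact ⟨u, hb.mem_of_forall hu fun s hs => Or.inl (hinit s hs), hlen⟩

theorem IsRegularTree.exists_mem_level_of_isBranch (hT : IsRegularTree κ T) (hb : IsBranch T b)
    {δ : Ordinal.{0}} (hδ : δ < κ.ord) (hlen : ∀ s ∈ b, s.len ≤ δ) :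
    ∃ x ∈ SeqLevel T δ, ∀ s ∈ b, s.Init x := by
  obtain ⟨m, hbm, hm⟩ := hb.exists_maximal
  obtain ⟨x, hxm, hxlen⟩ := hT.2.2.2.2.1 m hm δ hδ
  refine ⟨x, ⟨hm.1.1 hxm, hxlen⟩, fun s hs => ?_⟩
  rcases hm.1.2 s (hbm hs) x hxm with h | h
  · exact h
  · rw [h.eq_of_len_le (hxlen.symm ▸ hlen s hs)]

theorem IsRegularTree.exists_mem_level_init (hT : IsRegularTree κ T) (ht : t ∈ T)
    {δ : Ordinal.{0}} (hδ : δ < κ.ord) (hle : t.len ≤ δ) : ∃ x ∈ SeqLevel T δ, t.Init x := by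
  obtain ⟨x, hx, htx⟩ := hT.exists_mem_level_of_isBranch (b := {t})
    ⟨singleton_subset_iff.2 ht, by rintro s rfl u rfl; exact Or.inl (.refl _)⟩ hδ
    (by rintro s rfl; exact hle)
  exact ⟨x, hx, htx t rfl⟩

end Trees

theorem IsRegularTree.exists_injOn {κ : Cardinal.{0}} {T : Set (SeqNode κ)} (hκ : ℵ₀ ≤ κ)
    (hT : IsRegularTree κ T) :
    ∃ code : SeqNode κ → Ordinal.{0}, (∀ s, code s < κ.ord) ∧ InjOn code T := by
  have hcard : #T ≤ #(Iio κ.ord) := by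
    rw [mk_Iio_ordinal, card_ord]
    calc #T ≤ #(⋃ α ∈ Iio κ.ord, SeqLevel T α) :=
          mk_le_mk_of_subset fun t ht => mem_biUnion t.len_lt ⟨ht, rfl⟩
      _ ≤ #(Iio κ.ord) * ⨆ α : Iio κ.ord, #(SeqLevel T α) := mk_biUnion_le _ _
      _ ≤ lift κ * lift κ := by
          rw [mk_Iio_ordinal, card_ord]
          gcongr
          exact ciSup_le' fun α => by simpa using (hT.2.2.2.1 α α.2).le
      _ = lift κ := mul_eq_self (by simpa using hκ)
  obtain ⟨f⟩ := hcard
  have hκ0 : (0 : Ordinal) < κ.ord := by simpa using aleph0_pos.trans_le hκ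
  classical
  refine ⟨fun s => if h : s ∈ T then (f ⟨s, h⟩ : Ordinal) else 0, fun s => ?_, ?_⟩
  · dsimp only
    split_ifs
    exacts [(f _).2, hκ0]
  · intro s hs t ht hst
    simp only [dif_pos hs, dif_pos ht] at hst
    exact congrArg Subtype.val (f.injective (Subtype.ext hst))

theorem exists_strictMono_mem_of_cofinalIn {κ : Cardinal.{0}} (hκ : κ.IsRegular)
    {A : Set Ordinal.{0}} (hA : CofinalIn A κ.ord) :
    ∃ e : Ordinal.{0} → Ordinal.{0}, StrictMono e ∧ ∀ ζ < κ.ord, e ζ ∈ A := by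
  -- Adjoining `Ici κ.ord` makes the set unbounded; by regularity its first `κ` elements lie in `A`.
  have hunb : ¬ BddAbove (A ∪ Ici κ.ord) := fun h =>
    not_bddAbove_Ici κ.ord (h.mono subset_union_right)
  refine ⟨Ordinal.enumOrd (A ∪ Ici κ.ord), Ordinal.enumOrd_strictMono hunb, fun ζ hζ => ?_⟩
  suffices Ordinal.enumOrd (A ∪ Ici κ.ord) ζ < κ.ord from
    (Ordinal.enumOrd_mem hunb ζ).resolve_right this.not_ge
  induction ζ using WellFoundedLT.induction with
  | _ ζ IH =>
    have hsup : ⨆ ξ : Iio ζ, Ordinal.enumOrd (A ∪ Ici κ.ord) ξ + 1 < κ.ord := by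
      refine Ordinal.lift_iSup_add_one_lt_of_lt_cof ?_ fun ξ => IH ξ ξ.2 (ξ.2.trans hζ)
      rw [← Ordinal.lift_cof, hκ.cof_ord, mk_Iio_ordinal, lift_id'.{0, 1}, lift_lt]
      exact lt_ord.1 hζ
    obtain ⟨a, haA, hsup_le⟩ := hA.2 _ hsup
    refine (Ordinal.enumOrd_le_of_forall_lt (Or.inl haA) fun ξ hξ => ?_).trans_lt (hA.1 haA)
    exact (lt_add_one _).trans_le
      ((Ordinal.le_iSup (fun ξ : Iio ζ => Ordinal.enumOrd (A ∪ Ici κ.ord) ξ + 1) ⟨ξ, hξ⟩).trans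
        hsup_le)

section Compression

variable {κ : Cardinal.{0}} {T : Set (SeqNode κ)} {e : Ordinal.{0} → Ordinal.{0}}
  {code : SeqNode κ → Ordinal.{0}} {s t t' u u' : SeqNode κ}

def Encodes (code : SeqNode κ → Ordinal.{0}) (e : Ordinal.{0} → Ordinal.{0}) (t u : SeqNode κ) :
    Prop :=
  ∀ ξ < u.len, u.val ξ = code (t.restrict (e (ξ + 1)))

def compressTree (T : Set (SeqNode κ)) (e : Ordinal.{0} → Ordinal.{0})
    (code : SeqNode κ → Ordinal.{0}) : Set (SeqNode κ) :=
  {u | ∃ t ∈ SeqLevel T (e u.len), Encodes code e t u}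

open Classical in
noncomputable def decode (T : Set (SeqNode κ)) (e : Ordinal.{0} → Ordinal.{0})
    (code : SeqNode κ → Ordinal.{0}) (u : SeqNode κ) : SeqNode κ :=
  if h : u ∈ compressTree T e code then h.choose else u

theorem decode_mem_level (hu : u ∈ compressTree T e code) :
    decode T e code u ∈ SeqLevel T (e u.len) := by
  rw [decode, dif_pos hu]
  exact hu.choose_spec.1

theorem encodes_decode (hu : u ∈ compressTree T e code) : Encodes code e (decode T e code u) u := by
  rw [decode, dif_pos hu]
  exact hu.choose_spec.2

theorem mapsTo_decode (ζ : Ordinal.{0}) :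
    MapsTo (decode T e code) (SeqLevel (compressTree T e code) ζ) (SeqLevel T (e ζ)) :=
  fun _ hu => hu.2 ▸ decode_mem_level hu.1

theorem exists_encodes (hcode : ∀ s, code s < κ.ord) (t : SeqNode κ) {ζ : Ordinal.{0}}
    (hζ : ζ < κ.ord) : ∃ u : SeqNode κ, u.len = ζ ∧ Encodes code e t u := by
  classical
  refine ⟨{ len := ζ, len_lt := hζ
            val := fun ξ => if ξ < ζ then code (t.restrict (e (ξ + 1))) else 0
            val_lt := fun ξ hξ => by simp only [if_pos hξ, hcode]
            val_eq_zero := fun ξ hξ => if_neg hξ.not_gt }, rfl, fun ξ hξ => if_pos hξ⟩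

theorem Encodes.eq (hu : Encodes code e t u) (hu' : Encodes code e t u') (hlen : u.len = u'.len) :
    u = u' :=
  SeqNode.ext hlen fun ξ hξ => (hu ξ hξ).trans (hu' ξ (hlen ▸ hξ)).symm

theorem Encodes.of_init (hu : Encodes code e t u) (hs : s.Init u) : Encodes code e t s :=
  fun ξ hξ => (hs.2 ξ hξ).trans (hu ξ (hξ.trans_le hs.1))

theorem Encodes.restrict (hu : Encodes code e t u) {γ : Ordinal.{0}}
    (hγ : ∀ ξ < u.len, e (ξ + 1) ≤ γ) : Encodes code e (t.restrict γ) u :=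
  fun ξ hξ => by rw [hu ξ hξ, SeqNode.restrict_restrict (hγ ξ hξ)]

theorem Encodes.init_of_restrict_eq (hu : Encodes code e t u) (hu' : Encodes code e t' u')
    (hlen : u.len ≤ u'.len)
    (h : ∀ ξ < u.len, t.restrict (e (ξ + 1)) = t'.restrict (e (ξ + 1))) : u.Init u' :=
  ⟨hlen, fun ξ hξ => by rw [hu ξ hξ, hu' ξ (hξ.trans_le hlen), h ξ hξ]⟩

theorem Encodes.restrict_eq_of_init (hT : IsSeqTree T) (hinj : InjOn code T) (ht : t ∈ T)
    (ht' : t' ∈ T) (hu : Encodes code e t u) (hu' : Encodes code e t' u') (huu' : u.Init u')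
    {ξ : Ordinal.{0}} (hξ : ξ < u.len) : t.restrict (e (ξ + 1)) = t'.restrict (e (ξ + 1)) :=
  hinj (hT.restrict_mem ht _) (hT.restrict_mem ht' _)
    ((hu ξ hξ).symm.trans ((huu'.2 ξ hξ).trans (hu' ξ (hξ.trans_le huu'.1))))

theorem Encodes.init_of_init (hT : IsSeqTree T) (hinj : InjOn code T) (ht : t ∈ T) (ht' : t' ∈ T)
    (hu : Encodes code e t u) (hu' : Encodes code e t' u') (huu' : u.Init u') {ξ : Ordinal.{0}}
    (hξ : ξ < u.len) (htlen : t.len ≤ e (ξ + 1)) : t.Init t' := by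
  rw [← SeqNode.restrict_of_len_le htlen, hu.restrict_eq_of_init hT hinj ht ht' hu' huu' hξ]
  exact t'.restrict_init _

theorem Encodes.init_of_decode_init (he : Monotone e) (hu : u ∈ compressTree T e code)
    (hu' : Encodes code e t u') (hlen : u.len ≤ u'.len) (h : (decode T e code u).Init t) :
    u.Init u' :=
  (encodes_decode hu).init_of_restrict_eq hu' hlen fun _ hξ =>
    (h.restrict_eq ((he (Order.add_one_le_of_lt hξ)).trans (decode_mem_level hu).2.ge)).symm

theorem isSeqTree_compressTree (hT : IsSeqTree T) (he : Monotone e) :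
    IsSeqTree (compressTree T e code) := by
  rintro u ⟨t, ⟨htT, htlen⟩, hu⟩ s hs
  refine ⟨t.restrict (e s.len), ⟨hT.restrict_mem htT _, SeqNode.restrict_len (htlen ▸ he hs.1)⟩,
    (hu.of_init hs).restrict fun ξ hξ => he (Order.add_one_le_of_lt hξ)⟩

theorem mk_level_compressTree_le (ζ : Ordinal.{0}) :
    #(SeqLevel (compressTree T e code) ζ) ≤ #(SeqLevel T (e ζ)) := by
  have hinj : InjOn (decode T e code) (SeqLevel (compressTree T e code) ζ) := fun u hu u' hu' h =>
    (encodes_decode hu.1).eq (h ▸ encodes_decode hu'.1) (hu.2.trans hu'.2.symm)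
  rw [← mk_image_eq_of_injOn _ _ hinj]
  exact mk_le_mk_of_subset (mapsTo_decode ζ).image_subset

theorem exists_init_of_isBranch_compressTree (hT : IsRegularTree κ T) (hinj : InjOn code T)
    (hcode : ∀ s, code s < κ.ord) (he : Monotone e) (heκ : ∀ ζ < κ.ord, e ζ < κ.ord)
    {b : Set (SeqNode κ)} (hb : IsBranch (compressTree T e code) b) {γ : Ordinal.{0}}
    (hγ : γ < κ.ord) (hlen : ∀ s ∈ b, s.len < γ) :
    ∃ w ∈ compressTree T e code, w.len = γ ∧ ∀ s ∈ b, s.Init w := by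
  have hdec : ∀ u ∈ b, decode T e code u ∈ SeqLevel T (e u.len) := fun u hu =>
    decode_mem_level (hb.1 hu)
  have hagree : ∀ u ∈ b, ∀ u' ∈ b, u.Init u' → ∀ ξ < u.len,
      (decode T e code u).restrict (e (ξ + 1)) = (decode T e code u').restrict (e (ξ + 1)) :=
    fun u hu u' hu' huu' ξ hξ => (encodes_decode (hb.1 hu)).restrict_eq_of_init hT.1 hinj
      (hdec u hu).1 (hdec u' hu').1 (encodes_decode (hb.1 hu')) huu' hξ
  -- A node of `T (e γ)` above every element of `B` codes an upper bound of `b`.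
  let B := {r | ∃ u ∈ b, ∃ ξ < u.len, r = (decode T e code u).restrict (e (ξ + 1))}
  have hB : IsBranch T B := by
    refine ⟨fun _ ⟨u, hu, ξ, _, hr⟩ => hr ▸ hT.1.restrict_mem (hdec u hu).1 _, ?_⟩
    rintro _ ⟨u, hu, ξ, hξ, rfl⟩ _ ⟨u', hu', ξ', hξ', rfl⟩
    rcases hb.2 u hu u' hu' with h | h
    · rw [hagree u hu u' hu' h ξ hξ]
      exact SeqNode.restrict_init_or _ _ _
    · rw [hagree u' hu' u hu h ξ' hξ']
      exact SeqNode.restrict_init_or _ _ _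
  obtain ⟨x, hx, hxB⟩ := hT.exists_mem_level_of_isBranch hB (heκ γ hγ) (by
    rintro _ ⟨u, hu, ξ, hξ, rfl⟩
    exact (min_le_left _ _).trans (he (Order.add_one_le_of_lt (hξ.trans (hlen u hu)))))
  obtain ⟨w, hwlen, hw⟩ := exists_encodes hcode x hγ
  refine ⟨w, ⟨x, hwlen ▸ hx, hw⟩, hwlen, fun u hu => ?_⟩
  refine (encodes_decode (hb.1 hu)).init_of_restrict_eq hw (hwlen ▸ (hlen u hu).le) fun ξ hξ => ?_
  rw [← (hxB _ ⟨u, hu, ξ, hξ, rfl⟩).restrict_len_eq,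
    SeqNode.restrict_len ((he (Order.add_one_le_of_lt hξ)).trans (hdec u hu).2.ge)]

theorem isPerfect_compressTree (hκ : ℵ₀ ≤ κ) (hT : IsRegularTree κ T) (hinj : InjOn code T)
    (hcode : ∀ s, code s < κ.ord) (he : StrictMono e) (heκ : ∀ ζ < κ.ord, e ζ < κ.ord) :
    IsPerfect (compressTree T e code) := by
  intro u hu
  obtain ⟨htT, htlen⟩ := decode_mem_level hu
  obtain ⟨s, hs, v, hv, hts, htv, hsv, hvs⟩ := hT.2.2.2.2.2 _ htT
  set ζ := max u.len (max s.len v.len)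
  have hζ : ζ + 1 < κ.ord := (isSuccLimit_ord hκ).add_one_lt
    (max_lt u.len_lt (max_lt s.len_lt v.len_lt))
  have hζe : ζ ≤ e (ζ + 1) := le_self_add.trans he.le_apply
  obtain ⟨s₁, hs₁, hss₁⟩ := hT.exists_mem_level_init hs (heκ _ hζ)
    (((le_max_left _ _).trans (le_max_right _ _)).trans hζe)
  obtain ⟨v₁, hv₁, hvv₁⟩ := hT.exists_mem_level_init hv (heκ _ hζ)
    (((le_max_right _ _).trans (le_max_right _ _)).trans hζe)
  obtain ⟨ws, hwslen, hws⟩ := exists_encodes (e := e) hcode s₁ hζ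
  obtain ⟨wv, hwvlen, hwv⟩ := exists_encodes (e := e) hcode v₁ hζ
  have hne : ws ≠ wv := by
    rintro rfl
    have hsv₁ := hws.init_of_init hT.1 hinj hs₁.1 hv₁.1 hwv (.refl _)
      (hwslen ▸ lt_add_one _) hs₁.2.le
    exact ((hss₁.trans hsv₁).total hvv₁).elim hsv hvs
  have hulen : u.len ≤ ζ + 1 := (le_max_left _ _).trans le_self_add
  refine ⟨ws, ⟨s₁, hwslen ▸ hs₁, hws⟩, wv, ⟨v₁, hwvlen ▸ hv₁, hwv⟩,
    hws.init_of_decode_init he.monotone hu (hwslen ▸ hulen) (hts.trans hss₁),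
    hwv.init_of_decode_init he.monotone hu (hwvlen ▸ hulen) (htv.trans hvv₁),
    fun h => hne (h.eq_of_len_le (hwvlen.trans hwslen.symm).le),
    fun h => hne (h.eq_of_len_le (hwslen.trans hwvlen.symm).le).symm⟩

theorem isRegularTree_compressTree (hκ : ℵ₀ ≤ κ) (hT : IsRegularTree κ T) (hinj : InjOn code T)
    (hcode : ∀ s, code s < κ.ord) (he : StrictMono e) (heκ : ∀ ζ < κ.ord, e ζ < κ.ord) :
    IsRegularTree κ (compressTree T e code) := by
  have hU := isSeqTree_compressTree (code := code) hT.1 he.monotone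
  refine ⟨hU, fun u _ => u.len_lt, fun ζ hζ => ?_,
    fun ζ hζ => (mk_level_compressTree_le ζ).trans_lt (hT.2.2.2.1 _ (heκ ζ hζ)),
    fun b hb γ hγ => hb.exists_len_eq hU fun hlen => exists_init_of_isBranch_compressTree hT hinj
      hcode he.monotone heκ hb.1 hγ hlen,
    isPerfect_compressTree hκ hT hinj hcode he heκ⟩
  obtain ⟨t, ht⟩ := hT.2.2.1 _ (heκ ζ hζ)
  obtain ⟨u, hulen, hu⟩ := exists_encodes hcode t hζ
  exact ⟨u, ⟨t, hulen ▸ ht, hu⟩, hulen⟩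

theorem dominates_image_decode (hT : IsRegularTree κ T) (hinj : InjOn code T)
    (hcode : ∀ s, code s < κ.ord) (he : StrictMono e) (heκ : ∀ ζ < κ.ord, e ζ < κ.ord)
    {α β : Ordinal.{0}} (hαβ : α < β) (hβ : β < κ.ord)
    (ht : t ∈ SeqLevel (compressTree T e code) α) {X : Set (SeqNode κ)}
    (hX : X ⊆ SeqLevel (compressTree T e code) β)
    (hdom : Dominates X (SeqLevel (compressTree T e code) (α + 1) ∩ Cone t)) :
    Dominates (decode T e code '' X) (SeqLevel T (e α + 1) ∩ Cone (decode T e code t)) := by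
  rintro y ⟨⟨hyT, hylen⟩, hty⟩
  have hα : α + 1 < κ.ord := (Order.add_one_le_of_lt hαβ).trans_lt hβ
  obtain ⟨y₁, hy₁, hyy₁⟩ := hT.exists_mem_level_init hyT (heκ _ hα)
    (hylen ▸ Order.add_one_le_of_lt (he (lt_add_one _)))
  obtain ⟨w, hwlen, hw⟩ := exists_encodes hcode y₁ hα
  have htw : t.Init w :=
    hw.init_of_decode_init he.monotone ht.1 (hwlen ▸ ht.2 ▸ le_self_add) (hty.trans hyy₁)
  obtain ⟨x, hxX, hwx⟩ := hdom w ⟨⟨⟨y₁, hwlen ▸ hy₁, hw⟩, hwlen⟩, htw⟩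
  have hx := (hX hxX).1
  exact ⟨_, mem_image_of_mem _ hxX, hyy₁.trans (hw.init_of_init hT.1 hinj hy₁.1
    (decode_mem_level hx).1 (encodes_decode hx) hwx (hwlen ▸ lt_add_one _)
    hy₁.2.le)⟩

end Compression

theorem MonoOn.image {κ : Cardinal.{0}} {d : ℕ} {c : (Fin d → SeqNode κ) → Ordinal.{0}}
    {X : Fin d → Set (SeqNode κ)} {β : Ordinal.{0}} (f : Fin d → SeqNode κ → SeqNode κ)
    (hX : ∀ i, ∀ u ∈ X i, u.len = β) (h : MonoOn (fun x => c fun i => f i (x i)) X) :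
    MonoOn c fun i => f i '' X i := by
  have hlift : ∀ x ∈ LevelProd fun i => f i '' X i, ∃ u ∈ LevelProd X, x = fun i => f i (u i) := by
    rintro x ⟨_, hx⟩
    choose u hu hux using fun i => (hx i).1
    exact ⟨u, ⟨β, fun i => ⟨hu i, hX i _ (hu i)⟩⟩, funext fun i => (hux i).symm⟩
  intro x hx y hy
  obtain ⟨u, hu, rfl⟩ := hlift x hx
  obtain ⟨v, hv, rfl⟩ := hlift y hy
  exact h u hu v hv

theorem sdhl_on_cofinal_levels_general (d : ℕ) (κ σ : Cardinal.{0})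
    (hκ : κ.IsRegular) (hSDHL : SDHL d σ κ)
    (T : Fin d → Set (SeqNode κ)) (hT : ∀ i, IsRegularTree κ (T i))
    (c : (Fin d → SeqNode κ) → Ordinal.{0}) (hc : ∀ x ∈ LevelProd T, c x < σ.ord)
    (A : Set Ordinal.{0}) (hA : CofinalIn A κ.ord) :
    ∃ α ∈ A, ∃ β ∈ A, α < β ∧
      ∃ t : Fin d → SeqNode κ, (∀ i, t i ∈ SeqLevel (T i) α) ∧
        ∃ X : Fin d → Set (SeqNode κ),
          (∀ i, X i ⊆ SeqLevel (T i) β ∧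
            Dominates (X i) (SeqLevel (T i) (α + 1) ∩ Cone (t i))) ∧
          MonoOn c X := by
  obtain ⟨e, he, heA⟩ := exists_strictMono_mem_of_cofinalIn hκ hA
  have heκ : ∀ ζ < κ.ord, e ζ < κ.ord := fun ζ hζ => hA.1 (heA ζ hζ)
  choose code hcode hinj using fun i => (hT i).exists_injOn hκ.aleph0_le
  let U i := compressTree (T i) e (code i)
  let dec i := decode (T i) e (code i)
  have hU i : IsRegularTree κ (U i) :=
    isRegularTree_compressTree hκ.aleph0_le (hT i) (hinj i) (hcode i) he heκ
  have hcU : ∀ x ∈ LevelProd U, c (fun i => dec i (x i)) < σ.ord := fun x ⟨α, hx⟩ =>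
    hc _ ⟨e α, fun i => mapsTo_decode α (hx i)⟩
  obtain ⟨X, -, ⟨α, β, hαβ, hβ, t, ht, hX⟩, hmono⟩ := hSDHL U hU _ hcU
  refine ⟨e α, heA α (hαβ.trans hβ), e β, heA β hβ, he hαβ, fun i => dec i (t i),
    fun i => mapsTo_decode α (ht i), fun i => dec i '' X i, fun i => ⟨?_, ?_⟩,
    hmono.image dec fun i u hu => ((hX i).1 hu).2⟩
  · exact ((mapsTo_decode β).mono_left (hX i).1).image_subset
  · exact dominates_image_decode (hT i) (hinj i) (hcode i) he heκ hαβ hβ (ht i) (hX i).1 (hX i).2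

/-- SDHL can be applied with the two levels restricted to lie in any
prescribed cofinal set `A ⊆ κ`. -/
theorem sdhl_on_cofinal_levels (d : ℕ) (hd : 1 ≤ d) (κ σ : Cardinal.{0})
    (hκ : κ.IsRegular) (hσ0 : 0 < σ) (hσκ : σ < κ) (hSDHL : SDHL d σ κ)
    (T : Fin d → Set (SeqNode κ)) (hT : ∀ i, IsRegularTree κ (T i))
    (c : (Fin d → SeqNode κ) → Ordinal.{0}) (hc : ∀ x ∈ LevelProd T, c x < σ.ord)
    (A : Set Ordinal.{0}) (hA : CofinalIn A κ.ord) :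
    ∃ α ∈ A, ∃ β ∈ A, α < β ∧
      ∃ t : Fin d → SeqNode κ, (∀ i, t i ∈ SeqLevel (T i) α) ∧
        ∃ X : Fin d → Set (SeqNode κ),
          (∀ i, X i ⊆ SeqLevel (T i) β ∧
            Dominates (X i) (SeqLevel (T i) (α + 1) ∩ Cone (t i))) ∧
          MonoOn c X :=
  sdhl_on_cofinal_levels_general d κ σ hκ hSDHL T hT c hc A hA
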